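/- Let V ⊆ R^m be an r-dimensional subspace and φ ⊆ [m] with #φ = r+1 and dim π_φ(V) = r. Then π_φ(V) is a hyperplane in R^φ ≅ R^{r+1}, and the vector h ∈ R^{r+1} with k-th entry (−1)^{k−1}[φ \ {i_k}]_V (where φ = {i_1 < ... < i_{r+1}} and [·]_V are Plücker coordinates w.r.t. a fixed basis of V) is nonzero and orthogonal to π_φ(V), i.e., h is a normal vector of the hyperplane π_φ(V). -/

import Mathlib

open Matrix Finset

/-- Coordinate projection onto the coordinates indexed by `ψ`. -/
noncomputable def proj {m : ℕ} (ψ : Finset (Fin m)) :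
    ((Fin m) → ℝ) →ₗ[ℝ] ({i // i ∈ ψ} → ℝ) :=
  LinearMap.funLeft ℝ ℝ Subtype.val

/-- `B` is a basis matrix of `V`: its columns are linearly independent and span `V`. -/
def IsBasisMatrixOf {m r : ℕ} (B : Matrix (Fin m) (Fin r) ℝ)
    (V : Submodule ℝ (Fin m → ℝ)) : Prop :=
  LinearIndependent ℝ (fun j : Fin r => fun i : Fin m => B i j) ∧
    Submodule.span ℝ (Set.range (fun j : Fin r => fun i : Fin m => B i j)) = V

/-- Plücker coordinate: the `k×k` minor of `B` with rows indexed by `ψ`. -/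
noncomputable def pluck {m k : ℕ} (B : Matrix (Fin m) (Fin k) ℝ)
    (ψ : Finset (Fin m)) (h : ψ.card = k) : ℝ :=
  (B.submatrix (fun i : Fin k => ((ψ.orderIsoOfFin h i : Fin m))) id).det

/-!
Write the columns of `B`, restricted to the coordinates in `φ`, as the rows of an
`r × (r + 1)` matrix `C`. Expanding along the first row, `det [w; C] = ⟨h, w⟩`, where `h` is the
vector of signed maximal minors of `C` (the generalized cross product of its rows), and these
minors are the Plücker coordinates `[φ \ {i_k}]_V`. Hence `⟨h, w⟩` vanishes on the rows of `C`
(a repeated row), so on the space `π_φ(V)` they span. Since `dim π_φ(V) = r`, the rows of `C` are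
independent; completing them by some `w` to a basis gives `⟨h, w⟩ = det [w; C] ≠ 0`.
-/

namespace Matrix

variable {R : Type*} [CommRing R] {n : ℕ}

noncomputable def crossVec (C : Matrix (Fin n) (Fin (n + 1)) R) : Fin (n + 1) → R :=
  fun k => (-1) ^ (k : ℕ) * (C.submatrix id k.succAbove).det

theorem det_of_vecCons (C : Matrix (Fin n) (Fin (n + 1)) R) (w : Fin (n + 1) → R) :
    (of (vecCons w C)).det = crossVec C ⬝ᵥ w := by
  rw [det_succ_row_zero, dotProduct]
  refine sum_congr rfl fun k _ => ?_
  change (-1) ^ (k : ℕ) * w k * (C.submatrix id k.succAbove).det = crossVec C k * w k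
  rw [crossVec]
  ring

theorem crossVec_dotProduct_row (C : Matrix (Fin n) (Fin (n + 1)) R) (i : Fin n) :
    crossVec C ⬝ᵥ C i = 0 := by
  rw [← det_of_vecCons]
  exact det_zero_of_row_eq (Fin.succ_ne_zero i).symm rfl

theorem crossVec_dotProduct_eq_zero_of_mem_span {C : Matrix (Fin n) (Fin (n + 1)) R}
    {w : Fin (n + 1) → R} (hw : w ∈ Submodule.span R (Set.range C)) :
    crossVec C ⬝ᵥ w = 0 := by
  refine (Submodule.span_le (p := LinearMap.ker (dotProductBilin R R (crossVec C)))).2 ?_ hw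
  rintro _ ⟨i, rfl⟩
  exact crossVec_dotProduct_row C i

theorem crossVec_ne_zero {K : Type*} [Field K] {C : Matrix (Fin n) (Fin (n + 1)) K}
    (hC : LinearIndependent K C) : crossVec C ≠ 0 := by
  obtain ⟨w, hw⟩ : ∃ w, w ∉ Submodule.span K (Set.range C) := by
    by_contra! hall
    have hle := finrank_range_le_card (R := K) C
    rw [Set.finrank, Submodule.eq_top_iff'.2 hall, finrank_top, Module.finrank_fin_fun,
      Fintype.card_fin] at hle
    omega
  have hdet : (of (vecCons w C)).det ≠ 0 :=
    ((isUnit_iff_isUnit_det _).1 (linearIndependent_rows_iff_isUnit.1 (hC.finCons hw))).ne_zero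
  intro h0
  rw [det_of_vecCons, h0, zero_dotProduct] at hdet
  exact hdet rfl

end Matrix

theorem Finset.orderEmbOfFin_erase {α : Type*} [LinearOrder α] (s : Finset α) {n : ℕ}
    (hs : s.card = n + 1) (k : Fin (n + 1)) (hk : (s.erase (s.orderEmbOfFin hs k)).card = n) :
    ⇑((s.erase (s.orderEmbOfFin hs k)).orderEmbOfFin hk) = s.orderEmbOfFin hs ∘ k.succAbove :=
  (orderEmbOfFin_unique hk
    (fun j => mem_erase.2 ⟨(s.orderEmbOfFin hs).injective.ne (Fin.succAbove_ne k j),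
      orderEmbOfFin_mem s hs _⟩)
    ((s.orderEmbOfFin hs).strictMono.comp (Fin.strictMono_succAbove k))).symm

theorem pluck_erase_orderIsoOfFin {m r : ℕ} (B : Matrix (Fin m) (Fin r) ℝ) {φ : Finset (Fin m)}
    (hφ : φ.card = r + 1) (k : Fin (r + 1)) (hk : (φ.erase (φ.orderIsoOfFin hφ k)).card = r) :
    pluck B (φ.erase (φ.orderIsoOfFin hφ k)) hk =
      (B.submatrix (φ.orderEmbOfFin hφ ∘ k.succAbove) id).det := by
  rw [pluck, ← φ.orderEmbOfFin_erase hφ k hk]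
  rfl

theorem IsBasisMatrixOf.span_rows_submatrix_transpose {m r n : ℕ} {B : Matrix (Fin m) (Fin r) ℝ}
    {V : Submodule ℝ (Fin m → ℝ)} (hB : IsBasisMatrixOf B V) (e : Fin n → Fin m) :
    Submodule.span ℝ (Set.range (Bᵀ.submatrix id e)) = V.map (LinearMap.funLeft ℝ ℝ e) := by
  rw [← hB.2, Submodule.map_span, ← Set.range_comp]
  rfl

theorem finrank_map_funLeft_orderEmbOfFin {m n : ℕ} (V : Submodule ℝ (Fin m → ℝ))
    {φ : Finset (Fin m)} (hφ : φ.card = n) :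
    Module.finrank ℝ (V.map (LinearMap.funLeft ℝ ℝ (φ.orderEmbOfFin hφ))) =
      Module.finrank ℝ (V.map (proj φ)) := by
  let L := LinearEquiv.funCongrLeft ℝ ℝ (φ.orderIsoOfFin hφ).toEquiv
  have hcomp : LinearMap.funLeft ℝ ℝ (φ.orderEmbOfFin hφ) = L.toLinearMap ∘ₗ proj φ := rfl
  rw [hcomp, Submodule.map_comp, LinearEquiv.finrank_map_eq]

theorem stmt19 {m r : ℕ} (V : Submodule ℝ (Fin m → ℝ))
    (B : Matrix (Fin m) (Fin r) ℝ) (hB : IsBasisMatrixOf B V)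
    (φ : Finset (Fin m)) (hφ : φ.card = r + 1)
    (hφV : Module.finrank ℝ (V.map (proj φ)) = r)
    (h : Fin (r + 1) → ℝ)
    (hh : ∀ k : Fin (r + 1), h k =
      (-1 : ℝ) ^ (k : ℕ) *
        pluck B (φ.erase ((φ.orderIsoOfFin hφ k : Fin m)))
          (by simp [Finset.card_erase_of_mem (Finset.coe_mem _), hφ])) :
    h ≠ 0 ∧ ∀ v ∈ V, ∑ k : Fin (r + 1), h k * v ((φ.orderIsoOfFin hφ k : Fin m)) = 0 := by
  set e := φ.orderEmbOfFin hφ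
  set C : Matrix (Fin r) (Fin (r + 1)) ℝ := Bᵀ.submatrix id e
  have hspan : Submodule.span ℝ (Set.range C) = V.map (LinearMap.funLeft ℝ ℝ e) :=
    hB.span_rows_submatrix_transpose e
  have hC : LinearIndependent ℝ C := by
    refine linearIndependent_iff_card_eq_finrank_span.2 ?_
    rw [Set.finrank, hspan, finrank_map_funLeft_orderEmbOfFin, hφV, Fintype.card_fin]
  obtain rfl : h = crossVec C := funext fun k => by
    rw [hh k, crossVec, pluck_erase_orderIsoOfFin, ← det_transpose]
    rfl
  refine ⟨crossVec_ne_zero hC, fun v hv => ?_⟩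
  exact crossVec_dotProduct_eq_zero_of_mem_span (hspan ▸ Submodule.mem_map_of_mem hv)
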